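/- There exists a cubic graph of order 18 whose coalition number equals 9. -/

import Mathlib

/-!
In a cubic graph on 18 vertices every closed neighbourhood `N[w]` has 4 vertices, so a dominating
set has at least 5 vertices. Hence no part of a coalition partition dominates, two coalition
partners have at least 5 vertices together, and a part `X` has at most 4 partners: they are
pairwise disjoint and all meet `N[w]` for a vertex `w` that `X` does not dominate.

Counting part sizes against the 18 vertices, a partition with at least 10 parts has exactly
two parts `W₁`, `W₂` with at least 4 vertices, and at least eight smaller parts all of whose
partners are among `W₁`, `W₂`. So `W₁` has 4 partners, and they cover `N[w]`. Then `W₂`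
misses `N[w]`, so every partner of `W₂` meets `N[w]` and is therefore a partner of `W₁`, and the
eight small parts are among the 4 partners of `W₁`.
-/

/-- `S` dominates the vertex `v`: `v ∈ S` or some vertex of `S` is adjacent to `v`. -/
def SimpleGraph.DominatesVert {V : Type*} (G : SimpleGraph V) (S : Finset V) (v : V) : Prop :=
  v ∈ S ∨ ∃ u ∈ S, G.Adj u v

/-- `S` is a dominating set of `G`. -/
def SimpleGraph.IsDominatingSet {V : Type*} (G : SimpleGraph V) (S : Finset V) : Prop :=
  ∀ v, G.DominatesVert S v

/-- A coalition partition of `G`: a partition of the vertex set into nonempty parts,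
each of which is either a dominating singleton, or a non-dominating set forming a
coalition (dominating union) with another non-dominating part. -/
def SimpleGraph.IsCoalitionPartition {V : Type*} [Fintype V] [DecidableEq V]
    (G : SimpleGraph V) (P : Finset (Finset V)) : Prop :=
  (∀ A ∈ P, A.Nonempty) ∧
  (∀ A ∈ P, ∀ B ∈ P, A ≠ B → Disjoint A B) ∧
  (∀ v : V, ∃ A ∈ P, v ∈ A) ∧
  ∀ A ∈ P,
    (∃ v, A = {v} ∧ G.IsDominatingSet A) ∨
    (¬ G.IsDominatingSet A ∧
      ∃ B ∈ P, B ≠ A ∧ ¬ G.IsDominatingSet B ∧ G.IsDominatingSet (A ∪ B))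

/-- The coalition number of `G`: the maximum number of parts in a coalition partition. -/
noncomputable def SimpleGraph.coalitionNumber {V : Type*} [Fintype V] [DecidableEq V]
    (G : SimpleGraph V) : ℕ :=
  sSup {k | ∃ P : Finset (Finset V), G.IsCoalitionPartition P ∧ P.card = k}

open Finset

namespace Finset

variable {α : Type*}

theorem card_eq_add_card_filter_card_eq (P : Finset (Finset α)) (hP : ∀ A ∈ P, A.Nonempty) :
    #P = #{A ∈ P | #A = 1} + #{A ∈ P | #A = 2} + #{A ∈ P | #A = 3} +
      #{A ∈ P | 4 ≤ #A} := by
  simp only [card_filter]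
  rw [card_eq_sum_ones, ← sum_add_distrib, ← sum_add_distrib, ← sum_add_distrib]
  refine sum_congr rfl fun A hA => ?_
  have := (hP A hA).card_pos
  split_ifs <;> omega

theorem add_card_filter_card_eq_le_sum_card (P : Finset (Finset α)) :
    #{A ∈ P | #A = 1} + 2 * #{A ∈ P | #A = 2} + 3 * #{A ∈ P | #A = 3} +
      4 * #{A ∈ P | 4 ≤ #A} ≤ ∑ A ∈ P, #A := by
  simp only [card_filter, mul_sum]
  rw [← sum_add_distrib, ← sum_add_distrib, ← sum_add_distrib]
  exact sum_le_sum fun A _ => by split_ifs <;> omega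

section

variable [DecidableEq α] {F : Finset (Finset α)} {T : Finset α}

theorem card_le_card_of_forall_inter_nonempty (hF : (F : Set (Finset α)).PairwiseDisjoint id)
    (hT : ∀ A ∈ F, (A ∩ T).Nonempty) : #F ≤ #T :=
  (card_le_card_biUnion (hF.mono_on fun _ _ => inter_subset_left) hT).trans
    (card_le_card (biUnion_subset.2 fun _ _ => inter_subset_right))

theorem subset_biUnion_of_card_le_of_forall_inter_nonempty
    (hF : (F : Set (Finset α)).PairwiseDisjoint id) (hT : ∀ A ∈ F, (A ∩ T).Nonempty)
    (hTF : #T ≤ #F) : T ⊆ F.biUnion id := by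
  have hdisj : (F : Set (Finset α)).PairwiseDisjoint (· ∩ T) :=
    hF.mono_on fun _ _ => inter_subset_left
  have heq : F.biUnion (· ∩ T) = T :=
    eq_of_subset_of_card_le (biUnion_subset.2 fun _ _ => inter_subset_right)
      (hTF.trans (card_le_card_biUnion hdisj hT))
  intro x hx
  rw [← heq] at hx
  obtain ⟨A, hA, hxA⟩ := mem_biUnion.1 hx
  exact mem_biUnion.2 ⟨A, hA, (mem_inter.1 hxA).1⟩

end

end Finset

namespace SimpleGraph

variable {V : Type*} [DecidableEq V] (G : SimpleGraph V)

instance [DecidableRel G.Adj] (S : Finset V) (v : V) : Decidable (G.DominatesVert S v) :=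
  inferInstanceAs (Decidable (v ∈ S ∨ ∃ u ∈ S, G.Adj u v))

instance [Fintype V] [DecidableRel G.Adj] (S : Finset V) : Decidable (G.IsDominatingSet S) :=
  inferInstanceAs (Decidable (∀ v, G.DominatesVert S v))

variable [Fintype V] {G} {P : Finset (Finset V)} {A B X Y : Finset V} {r : ℕ}

namespace IsCoalitionPartition

theorem pairwiseDisjoint (hP : G.IsCoalitionPartition P) :
    (P : Set (Finset V)).PairwiseDisjoint id :=
  fun A hA B hB hAB => hP.2.1 A hA B hB hAB

theorem eq_of_mem_of_mem (hP : G.IsCoalitionPartition P) {x : V} (hA : A ∈ P) (hB : B ∈ P)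
    (hxA : x ∈ A) (hxB : x ∈ B) : A = B :=
  by_contra fun h => Finset.disjoint_left.1 (hP.2.1 A hA B hB h) hxA hxB

theorem sum_card_le (hP : G.IsCoalitionPartition P) : ∑ A ∈ P, #A ≤ Fintype.card V :=
  (card_biUnion hP.pairwiseDisjoint).symm.trans_le (card_le_univ _)

end IsCoalitionPartition

theorem coalitionNumber_eq_card (hP : G.IsCoalitionPartition P)
    (hmax : ∀ Q, G.IsCoalitionPartition Q → #Q ≤ #P) : G.coalitionNumber = #P :=
  IsGreatest.csSup_eq ⟨⟨P, hP, rfl⟩, by rintro _ ⟨Q, hQ, rfl⟩; exact hmax Q hQ⟩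

variable (G) [DecidableRel G.Adj]

def closedNeighborFinset (v : V) : Finset V := insert v (G.neighborFinset v)

def coalitionPartners (P : Finset (Finset V)) (A : Finset V) : Finset (Finset V) :=
  {B ∈ P | B ≠ A ∧ G.IsDominatingSet (A ∪ B)}

variable {G}

@[simp]
theorem mem_closedNeighborFinset {u v : V} :
    u ∈ G.closedNeighborFinset v ↔ u = v ∨ G.Adj v u := by
  simp [closedNeighborFinset]

theorem mem_closedNeighborFinset_comm {u v : V} :
    u ∈ G.closedNeighborFinset v ↔ v ∈ G.closedNeighborFinset u := by
  simp only [mem_closedNeighborFinset, eq_comm, G.adj_comm]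

theorem card_closedNeighborFinset (v : V) : #(G.closedNeighborFinset v) = G.degree v + 1 :=
  card_insert_of_notMem (G.notMem_neighborFinset_self v)

theorem dominatesVert_iff_inter_nonempty {S : Finset V} {v : V} :
    G.DominatesVert S v ↔ (S ∩ G.closedNeighborFinset v).Nonempty := by
  simp only [DominatesVert, Finset.Nonempty, mem_inter, mem_closedNeighborFinset]
  constructor
  · rintro (hv | ⟨u, hu, huv⟩)
    · exact ⟨v, hv, .inl rfl⟩
    · exact ⟨u, hu, .inr huv.symm⟩
  · rintro ⟨u, hu, rfl | hvu⟩
    · exact .inl hu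
    · exact .inr ⟨u, hu, hvu.symm⟩

theorem IsRegularOfDegree.card_le_mul_card_of_isDominatingSet (hG : G.IsRegularOfDegree r)
    {S : Finset V} (hS : G.IsDominatingSet S) : Fintype.card V ≤ #S * (r + 1) := by
  have hcover : univ ⊆ S.biUnion G.closedNeighborFinset := fun v _ => by
    obtain ⟨u, hu⟩ := dominatesVert_iff_inter_nonempty.1 (hS v)
    rw [mem_inter] at hu
    exact mem_biUnion.2 ⟨u, hu.1, mem_closedNeighborFinset_comm.1 hu.2⟩
  calc Fintype.card V = #(univ : Finset V) := card_univ.symm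
    _ ≤ #(S.biUnion G.closedNeighborFinset) := card_le_card hcover
    _ ≤ #S * (r + 1) := card_biUnion_le_card_mul _ _ _ fun u _ => by
        rw [card_closedNeighborFinset, hG.degree_eq]

@[simp]
theorem mem_coalitionPartners :
    B ∈ G.coalitionPartners P A ↔ B ∈ P ∧ B ≠ A ∧ G.IsDominatingSet (A ∪ B) :=
  mem_filter

theorem coalitionPartners_subset : G.coalitionPartners P A ⊆ P := filter_subset _ _

theorem mem_coalitionPartners_symm (hA : A ∈ P) (hB : B ∈ G.coalitionPartners P A) :
    A ∈ G.coalitionPartners P B := by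
  obtain ⟨-, hBA, hdom⟩ := mem_coalitionPartners.1 hB
  exact mem_coalitionPartners.2 ⟨hA, hBA.symm, union_comm A B ▸ hdom⟩

theorem inter_closedNeighborFinset_nonempty_of_mem_coalitionPartners {w : V}
    (hXw : ¬ G.DominatesVert X w) (hB : B ∈ G.coalitionPartners P X) :
    (B ∩ G.closedNeighborFinset w).Nonempty := by
  have h := dominatesVert_iff_inter_nonempty.1 ((mem_coalitionPartners.1 hB).2.2 w)
  rw [union_inter_distrib_right, union_nonempty] at h
  exact h.resolve_left (mt dominatesVert_iff_inter_nonempty.2 hXw)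

namespace IsCoalitionPartition

theorem not_isDominatingSet (hP : G.IsCoalitionPartition P) (hG : G.IsRegularOfDegree r)
    (hr : r + 1 < Fintype.card V) (hA : A ∈ P) : ¬ G.IsDominatingSet A := by
  rcases hP.2.2.2 A hA with ⟨v, rfl, hdom⟩ | ⟨hnd, -⟩
  · have := hG.card_le_mul_card_of_isDominatingSet hdom
    rw [card_singleton] at this
    omega
  · exact hnd

theorem coalitionPartners_nonempty (hP : G.IsCoalitionPartition P) (hA : A ∈ P)
    (hnd : ¬ G.IsDominatingSet A) : (G.coalitionPartners P A).Nonempty := by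
  rcases hP.2.2.2 A hA with ⟨v, rfl, hdom⟩ | ⟨-, B, hB, hBA, -, hdom⟩
  · exact absurd hdom hnd
  · exact ⟨B, mem_coalitionPartners.2 ⟨hB, hBA, hdom⟩⟩

theorem pairwiseDisjoint_coalitionPartners (hP : G.IsCoalitionPartition P) :
    (G.coalitionPartners P X : Set (Finset V)).PairwiseDisjoint id :=
  hP.pairwiseDisjoint.subset (coe_subset.2 coalitionPartners_subset)

theorem card_coalitionPartners_le (hP : G.IsCoalitionPartition P) (hG : G.IsRegularOfDegree r)
    (hX : ¬ G.IsDominatingSet X) : #(G.coalitionPartners P X) ≤ r + 1 := by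
  obtain ⟨w, hw⟩ := not_forall.1 hX
  calc #(G.coalitionPartners P X) ≤ #(G.closedNeighborFinset w) :=
        card_le_card_of_forall_inter_nonempty hP.pairwiseDisjoint_coalitionPartners
          fun _ hB => inter_closedNeighborFinset_nonempty_of_mem_coalitionPartners hw hB
    _ = r + 1 := by rw [card_closedNeighborFinset, hG.degree_eq]

theorem coalitionPartners_subset_of_card_le (hP : G.IsCoalitionPartition P)
    (hG : G.IsRegularOfDegree r) (hX : ¬ G.IsDominatingSet X)
    (hsat : r + 1 ≤ #(G.coalitionPartners P X)) (hY : Y ∈ P)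
    (hYX : Y ∉ G.coalitionPartners P X) :
    G.coalitionPartners P Y ⊆ G.coalitionPartners P X := by
  obtain ⟨w, hw⟩ := not_forall.1 hX
  have hcover : G.closedNeighborFinset w ⊆ (G.coalitionPartners P X).biUnion id :=
    subset_biUnion_of_card_le_of_forall_inter_nonempty hP.pairwiseDisjoint_coalitionPartners
      (fun _ hB => inter_closedNeighborFinset_nonempty_of_mem_coalitionPartners hw hB)
      (by rwa [card_closedNeighborFinset, hG.degree_eq])
  have hpart : ∀ Z ∈ P, (Z ∩ G.closedNeighborFinset w).Nonempty →
      Z ∈ G.coalitionPartners P X := fun Z hZ ⟨x, hx⟩ => by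
    rw [mem_inter] at hx
    obtain ⟨Q, hQ, hxQ⟩ := mem_biUnion.1 (hcover hx.2)
    rwa [hP.eq_of_mem_of_mem hZ (coalitionPartners_subset hQ) hx.1 hxQ]
  have hYw : ¬ G.DominatesVert Y w := fun h =>
    hYX (hpart Y hY (dominatesVert_iff_inter_nonempty.1 h))
  exact fun R hR => hpart R (coalitionPartners_subset hR)
    (inter_closedNeighborFinset_nonempty_of_mem_coalitionPartners hYw hR)

theorem card_lt_of_subset_coalitionPartners_union (hP : G.IsCoalitionPartition P)
    (hG : G.IsRegularOfDegree r) {W₁ W₂ : Finset V} (hW₁ : ¬ G.IsDominatingSet W₁)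
    (hW₂ : ¬ G.IsDominatingSet W₂) (hW₂P : W₂ ∈ P) {D : Finset (Finset V)}
    (hD : D ⊆ G.coalitionPartners P W₁ ∪ G.coalitionPartners P W₂) (hW₂D : W₂ ∉ D) :
    #D < 2 * (r + 1) := by
  by_contra! hcard
  have h₁ := hP.card_coalitionPartners_le hG hW₁
  have h₂ := hP.card_coalitionPartners_le hG hW₂
  have hunion := card_union_le (G.coalitionPartners P W₁) (G.coalitionPartners P W₂)
  have hDunion := card_le_card hD
  have hDeq : D = G.coalitionPartners P W₁ ∪ G.coalitionPartners P W₂ :=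
    eq_of_subset_of_card_le hD (by omega)
  have hsub : G.coalitionPartners P W₂ ⊆ G.coalitionPartners P W₁ :=
    hP.coalitionPartners_subset_of_card_le hG hW₁ (by omega) hW₂P
      fun h => hW₂D (hDeq ▸ mem_union_left _ h)
  rw [hDeq, union_eq_left.2 hsub] at hcard
  omega

theorem subset_biUnion_coalitionPartners (hP : G.IsCoalitionPartition P)
    (hnd : ∀ A ∈ P, ¬ G.IsDominatingSet A) {D L : Finset (Finset V)} (hDP : D ⊆ P)
    (hDL : ∀ A ∈ D, ∀ B ∈ G.coalitionPartners P A, B ∈ L) :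
    D ⊆ L.biUnion (G.coalitionPartners P) := fun A hA => by
  obtain ⟨B, hB⟩ := hP.coalitionPartners_nonempty (hDP hA) (hnd A (hDP hA))
  exact mem_biUnion.2 ⟨B, hDL A hA B hB, mem_coalitionPartners_symm (hDP hA) hB⟩

end IsCoalitionPartition

section Cubic

variable (hV : Fintype.card V = 18) (hG : G.IsRegularOfDegree 3)
include hV hG

theorem five_le_card_add_card_of_mem_coalitionPartners (hB : B ∈ G.coalitionPartners P A) :
    5 ≤ #A + #B := by
  have := hG.card_le_mul_card_of_isDominatingSet (mem_coalitionPartners.1 hB).2.2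
  have := card_union_le A B
  omega

theorem card_filter_card_eq_three_pos_of_small_partners (hA : A ∈ P)
    (hB : B ∈ G.coalitionPartners P A) (hA4 : #A < 4) (hB4 : #B < 4) :
    0 < #{C ∈ P | #C = 3} ∧ (0 < #{C ∈ P | #C = 2} ∨ 1 < #{C ∈ P | #C = 3}) := by
  have h5 := five_le_card_add_card_of_mem_coalitionPartners hV hG hB
  have hBP := coalitionPartners_subset hB
  have hBA := (mem_coalitionPartners.1 hB).2.1
  have hmem : ∀ C ∈ P, ∀ i, #C = i → C ∈ ({C ∈ P | #C = i} : Finset _) :=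
    fun C hC i h => mem_filter.2 ⟨hC, h⟩
  rcases (by omega : (#A = 2 ∧ #B = 3) ∨ (#A = 3 ∧ #B = 2) ∨ (#A = 3 ∧ #B = 3)) with
    ⟨h₁, h₂⟩ | ⟨h₁, h₂⟩ | ⟨h₁, h₂⟩
  · exact ⟨card_pos.2 ⟨B, hmem B hBP 3 h₂⟩, .inl (card_pos.2 ⟨A, hmem A hA 2 h₁⟩)⟩
  · exact ⟨card_pos.2 ⟨A, hmem A hA 3 h₁⟩, .inl (card_pos.2 ⟨B, hmem B hBP 2 h₂⟩)⟩
  · exact ⟨card_pos.2 ⟨A, hmem A hA 3 h₁⟩,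
      .inr (one_lt_card.2 ⟨A, hmem A hA 3 h₁, B, hmem B hBP 3 h₂, hBA.symm⟩)⟩

theorem IsCoalitionPartition.forall_not_isDominatingSet (hP : G.IsCoalitionPartition P) :
    ∀ A ∈ P, ¬ G.IsDominatingSet A :=
  fun _ hA => hP.not_isDominatingSet hG (by omega) hA

theorem IsCoalitionPartition.card_filter_four_le_eq_two_and_eight_le (hP : G.IsCoalitionPartition P)
    (hk : 10 ≤ #P) :
    #{A ∈ P | 4 ≤ #A} = 2 ∧
      8 ≤ #{A ∈ P | #A < 4 ∧ ∀ B ∈ G.coalitionPartners P A, 4 ≤ #B} := by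
  set D := {A ∈ P | #A < 4 ∧ ∀ B ∈ G.coalitionPartners P A, 4 ≤ #B}
  have hnd := hP.forall_not_isDominatingSet hV hG
  have hDL : D ⊆ {A ∈ P | 4 ≤ #A}.biUnion (G.coalitionPartners P) :=
    hP.subset_biUnion_coalitionPartners hnd (filter_subset _ _) fun A hA B hB =>
      mem_filter.2 ⟨coalitionPartners_subset hB, (mem_filter.1 hA).2.2 B hB⟩
  have hD : #D ≤ #{A ∈ P | 4 ≤ #A} * (3 + 1) :=
    (card_le_card hDL).trans <| card_biUnion_le_card_mul _ _ _ fun W hW =>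
      hP.card_coalitionPartners_le hG (hnd W (mem_filter.1 hW).1)
  have hD_singletons : #{A ∈ P | #A = 1} ≤ #D := card_le_card fun A hA => by
    obtain ⟨hAP, h1⟩ := mem_filter.1 hA
    refine mem_filter.2 ⟨hAP, by omega, fun B hB => ?_⟩
    have := five_le_card_add_card_of_mem_coalitionPartners hV hG hB
    omega
  have hD_small :
      #{A ∈ P | #A = 3} = 0 ∨ (#{A ∈ P | #A = 2} = 0 ∧ #{A ∈ P | #A = 3} ≤ 1) →
        #{A ∈ P | #A < 4} ≤ #D := fun h => card_le_card fun A hA => by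
    obtain ⟨hAP, h4⟩ := mem_filter.1 hA
    refine mem_filter.2 ⟨hAP, h4, fun B hB => ?_⟩
    by_contra hB4
    have := card_filter_card_eq_three_pos_of_small_partners hV hG hAP hB h4 (by omega)
    omega
  have hsplit : #{A ∈ P | #A < 4} + #{A ∈ P | 4 ≤ #A} = #P := by
    simpa only [not_lt] using card_filter_add_card_filter_not (s := P) (fun A => #A < 4)
  have hcount := card_eq_add_card_filter_card_eq P hP.1
  have hweight := (add_card_filter_card_eq_le_sum_card P).trans hP.sum_card_le
  -- With `a, b, c, d` parts of sizes `1, 2, 3, ≥ 4`, the bounds `a + b + c + d ≥ 10`,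
  -- `a + 2b + 3c + 4d ≤ 18` and `a ≤ 4d` force `d ∈ {1, 2}` and then `hD_small` applies.
  omega

theorem IsCoalitionPartition.card_le_nine (hP : G.IsCoalitionPartition P) : #P ≤ 9 := by
  by_contra! hk
  obtain ⟨hL, hD⟩ := hP.card_filter_four_le_eq_two_and_eight_le hV hG hk
  set D := {A ∈ P | #A < 4 ∧ ∀ B ∈ G.coalitionPartners P A, 4 ≤ #B}
  obtain ⟨W₁, W₂, -, hLW⟩ := card_eq_two.1 hL
  have hW₁ : W₁ ∈ {A ∈ P | 4 ≤ #A} := hLW ▸ mem_insert_self _ _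
  have hW₂ : W₂ ∈ {A ∈ P | 4 ≤ #A} := hLW ▸ mem_insert_of_mem (mem_singleton_self _)
  have hnd := hP.forall_not_isDominatingSet hV hG
  have hsub : D ⊆ G.coalitionPartners P W₁ ∪ G.coalitionPartners P W₂ := by
    have h := hP.subset_biUnion_coalitionPartners hnd (D := D) (filter_subset _ _)
      fun A hA B hB =>
        hLW ▸ mem_filter.2 ⟨coalitionPartners_subset hB, (mem_filter.1 hA).2.2 B hB⟩
    rwa [Finset.biUnion_insert, Finset.singleton_biUnion] at h
  have := hP.card_lt_of_subset_coalitionPartners_union hG (hnd W₁ (mem_filter.1 hW₁).1)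
    (hnd W₂ (mem_filter.1 hW₂).1) (mem_filter.1 hW₂).1 hsub
    fun h => by have := (mem_filter.1 h).2.1; have := (mem_filter.1 hW₂).2; omega
  omega

end Cubic

end SimpleGraph

open SimpleGraph

/-- The witness of the paper, with its vertices numbered from `0` instead of `1`. -/
def cubicWitness : SimpleGraph (Fin 18) := SimpleGraph.fromRel fun a b => (a, b) ∈
  [(0, 2), (0, 5), (0, 17), (1, 4), (1, 8), (1, 12), (2, 4), (2, 17), (3, 4), (3, 13), (3, 14),
    (5, 10), (5, 17), (6, 7), (6, 14), (6, 16), (7, 10), (7, 15), (8, 12), (8, 15), (9, 11),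
    (9, 13), (9, 16), (10, 11), (11, 14), (12, 16), (13, 15)]

instance : DecidableRel cubicWitness.Adj := fun a b => inferInstanceAs (Decidable (a ≠ b ∧ _))

def cubicWitnessPartition : Finset (Finset (Fin 18)) :=
  {{0}, {2}, {8}, {11}, {12}, {14}, {1, 6, 10, 13}, {3, 7, 9, 17}, {4, 5, 15, 16}}

theorem cubicWitness_isRegularOfDegree : cubicWitness.IsRegularOfDegree 3 := by
  rw [IsRegularOfDegree]
  decide

theorem card_cubicWitnessPartition : #cubicWitnessPartition = 9 := by decide

set_option synthInstance.maxSize 10000 in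
theorem cubicWitness_isCoalitionPartition :
    cubicWitness.IsCoalitionPartition cubicWitnessPartition := by
  simp only [IsCoalitionPartition, cubicWitnessPartition, mem_insert, mem_singleton,
    forall_eq_or_imp, forall_eq, exists_eq_or_imp, exists_eq_left]
  decide

/-- There exists a cubic graph of order 18 whose coalition number equals 9. -/
theorem exists_cubic_order18_coalition_nine :
    ∃ G : SimpleGraph (Fin 18), ∃ _ : DecidableRel G.Adj, G.IsRegularOfDegree 3 ∧ G.coalitionNumber = 9 := by
  refine ⟨cubicWitness, inferInstance, cubicWitness_isRegularOfDegree, ?_⟩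
  rw [← card_cubicWitnessPartition]
  exact coalitionNumber_eq_card cubicWitness_isCoalitionPartition fun Q hQ =>
    card_cubicWitnessPartition ▸
      hQ.card_le_nine (Fintype.card_fin 18) cubicWitness_isRegularOfDegree
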